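/- arXiv:1101.5218 — 3 statements merged into one kernel-verified Lean document; each statement's English description precedes it below -/
import Mathlib

section
/- Let a, b : ℝ → ℝ be differentiable with a'(t) = -q(t) and b'(t) = -p(t) for given continuous functions q, p, and suppose a(t), b(t) > 0. Define u(t) = (a(t)/(2 b(t)))(1 - cosh √(2 a(t) b(t))) + c √(a(t)/(2 b(t))) sinh √(2 a(t) b(t)), V(t) = (1/2)(1 + cosh √(2 a(t) b(t))) - c √(b(t)/(2 a(t))) sinh √(2 a(t) b(t)), and Q(t) = -√(a(t)/(2 b(t))) sinh √(2 a(t) b(t)) + c cosh √(2 a(t) b(t)), further assuming a'(t) b(t) = a(t) b'(t) (i.e., q b = p a). Then (u, V, Q) solves the linear system u' = -q Q, V' = p Q, Q' = -p u + q V. -/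
open Real

set_option maxHeartbeats 1000000 in
/-- Closed-form solution of the GOE epsilon ODE system. -/
theorem stmt_0 (q p a b : ℝ → ℝ) (c : ℝ)
    (hq : Continuous q) (hp : Continuous p)
    (ha' : ∀ t, HasDerivAt a (-q t) t) (hb' : ∀ t, HasDerivAt b (-p t) t)
    (hapos : ∀ t, 0 < a t) (hbpos : ∀ t, 0 < b t)
    (hcompat : ∀ t, (-q t) * b t = a t * (-p t)) :
    ∀ t : ℝ,
      HasDerivAt
        (fun t => a t / (2 * b t) * (1 - Real.cosh (Real.sqrt (2 * a t * b t))) +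
          c * Real.sqrt (a t / (2 * b t)) * Real.sinh (Real.sqrt (2 * a t * b t)))
        (-q t *
          (-Real.sqrt (a t / (2 * b t)) * Real.sinh (Real.sqrt (2 * a t * b t)) +
            c * Real.cosh (Real.sqrt (2 * a t * b t)))) t ∧
      HasDerivAt
        (fun t => (1 / 2) * (1 + Real.cosh (Real.sqrt (2 * a t * b t))) -
          c * Real.sqrt (b t / (2 * a t)) * Real.sinh (Real.sqrt (2 * a t * b t)))
        (p t *
          (-Real.sqrt (a t / (2 * b t)) * Real.sinh (Real.sqrt (2 * a t * b t)) +
            c * Real.cosh (Real.sqrt (2 * a t * b t)))) t ∧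
      HasDerivAt
        (fun t => -Real.sqrt (a t / (2 * b t)) * Real.sinh (Real.sqrt (2 * a t * b t)) +
          c * Real.cosh (Real.sqrt (2 * a t * b t)))
        (-p t *
          (a t / (2 * b t) * (1 - Real.cosh (Real.sqrt (2 * a t * b t))) +
            c * Real.sqrt (a t / (2 * b t)) * Real.sinh (Real.sqrt (2 * a t * b t))) +
          q t *
            ((1 / 2) * (1 + Real.cosh (Real.sqrt (2 * a t * b t))) -
              c * Real.sqrt (b t / (2 * a t)) * Real.sinh (Real.sqrt (2 * a t * b t)))) t := by
  intro t
  have hat := hapos t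
  have hbt := hbpos t
  have hane : a t ≠ 0 := ne_of_gt hat
  have hbne : b t ≠ 0 := ne_of_gt hbt
  have hcmp : q t * b t = a t * p t := by
    have := hcompat t; nlinarith [this]
  -- abbreviations
  set s := Real.sqrt (2 * a t * b t) with hs_def
  set R := Real.sqrt (a t / (2 * b t)) with hR_def
  set W := Real.sqrt (b t / (2 * a t)) with hW_def
  have hspos : 0 < s := Real.sqrt_pos.mpr (by positivity)
  have hRpos : 0 < R := Real.sqrt_pos.mpr (by positivity)
  have hWpos : 0 < W := Real.sqrt_pos.mpr (by positivity)
  have hsne : s ≠ 0 := ne_of_gt hspos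
  have hRne : R ≠ 0 := ne_of_gt hRpos
  have hWne : W ≠ 0 := ne_of_gt hWpos
  have hr2 : R ^ 2 = a t / (2 * b t) := Real.sq_sqrt (by positivity)
  have hw2 : W ^ 2 = b t / (2 * a t) := Real.sq_sqrt (by positivity)
  have hs2 : s ^ 2 = 2 * a t * b t := Real.sq_sqrt (by positivity)
  have hRs : R * s = a t := by
    rw [hR_def, hs_def, ← Real.sqrt_mul (by positivity)]
    rw [show a t / (2 * b t) * (2 * a t * b t) = (a t) ^ 2 by field_simp]
    exact Real.sqrt_sq hat.le
  have hWs : W * s = b t := by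
    rw [hW_def, hs_def, ← Real.sqrt_mul (by positivity)]
    rw [show b t / (2 * a t) * (2 * a t * b t) = (b t) ^ 2 by field_simp]
    exact Real.sqrt_sq hbt.le
  have h2bR : 2 * b t * R = s := by
    have h : (2 * b t * R - s) * R = 0 := by
      have : 2 * b t * R ^ 2 = a t := by rw [hr2]; field_simp
      nlinarith [hRs, this]
    rcases mul_eq_zero.mp h with h | h
    · linarith
    · exact absurd h hRne
  have h2aW : 2 * a t * W = s := by
    have h : (2 * a t * W - s) * W = 0 := by
      have : 2 * a t * W ^ 2 = b t := by rw [hw2]; field_simp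
      nlinarith [hWs, this]
    rcases mul_eq_zero.mp h with h | h
    · linarith
    · exact absurd h hWne
  have hqW : q t * W = p t * R := by
    have h : (q t * W - p t * R) * s = 0 := by
      have h1 : q t * (W * s) = q t * b t := by rw [hWs]
      have h2 : p t * (R * s) = p t * a t := by rw [hRs]
      nlinarith [hcmp]
    rcases mul_eq_zero.mp h with h | h
    · linarith
    · exact absurd h hsne
  have hRW : R * W = 1 / 2 := by
    have hsq : (R * W) ^ 2 = (1/2 : ℝ)^2 := by
      rw [mul_pow, hr2, hw2]; field_simp
    nlinarith [mul_pos hRpos hWpos]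
  have hpA2 : p t * R ^ 2 = q t / 2 := by
    rw [hr2, eq_div_iff (two_ne_zero)]
    field_simp
    linear_combination (-1:ℝ) * hcmp
  -- derivative of s = sqrt(2ab)
  have hinner : HasDerivAt (fun t => 2 * a t * b t) (2 * (-q t) * b t + 2 * a t * (-p t)) t :=
    ((ha' t).const_mul 2).mul (hb' t)
  have hS : HasDerivAt (fun t => Real.sqrt (2 * a t * b t)) (-(2 * q t * W)) t := by
    have h := hinner.sqrt (by positivity : 2 * a t * b t ≠ 0)
    convert h using 1
    rw [eq_div_iff (by positivity : (2 : ℝ) * Real.sqrt (2 * a t * b t) ≠ 0), ← hs_def]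
    linear_combination (-2:ℝ) * hcmp + (-4 * q t) * hWs
  -- derivative of a/(2b)
  have hA : HasDerivAt (fun t => a t / (2 * b t)) 0 t := by
    have h := (ha' t).div ((hb' t).const_mul 2) (by positivity)
    refine h.congr_deriv (Eq.symm ?_)
    field_simp
    linear_combination (1:ℝ) * hcmp
  have hB : HasDerivAt (fun t => b t / (2 * a t)) 0 t := by
    have h := (hb' t).div ((ha' t).const_mul 2) (by positivity)
    refine h.congr_deriv (Eq.symm ?_)
    field_simp
    linear_combination (-1:ℝ) * hcmp
  have hR0 : HasDerivAt (fun t => Real.sqrt (a t / (2 * b t))) 0 t := by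
    have h := hA.sqrt (by positivity : a t / (2 * b t) ≠ 0)
    convert h using 1
    simp
  have hW0 : HasDerivAt (fun t => Real.sqrt (b t / (2 * a t))) 0 t := by
    have h := hB.sqrt (by positivity : b t / (2 * a t) ≠ 0)
    convert h using 1
    simp
  have hcoshS : HasDerivAt (fun t => Real.cosh (Real.sqrt (2 * a t * b t)))
      (Real.sinh s * (-(2 * q t * W))) t := hS.cosh
  have hsinhS : HasDerivAt (fun t => Real.sinh (Real.sqrt (2 * a t * b t)))
      (Real.cosh s * (-(2 * q t * W))) t := hS.sinh
  refine ⟨?_, ?_, ?_⟩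
  · -- u
    have h := (hA.mul ((hasDerivAt_const t (1:ℝ)).sub hcoshS)).add
      ((hR0.const_mul c).mul hsinhS)
    refine h.congr_deriv (Eq.symm ?_)
    have key : a t / (2 * b t) = R ^ 2 := hr2.symm
    rw [key, Real.sqrt_sq hRpos.le]
    linear_combination (-(2 * q t * R * Real.sinh s) + 2 * q t * c * Real.cosh s) * hRW
  · -- V
    have h := (((hasDerivAt_const t ((1:ℝ)/2)).mul
        ((hasDerivAt_const t (1:ℝ)).add hcoshS))).sub ((hW0.const_mul c).mul hsinhS)
    refine h.congr_deriv (Eq.symm ?_)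
    rw [← hW_def]
    linear_combination (Real.sinh s) * hqW + (-2 * p t * c * Real.cosh s) * hRW +
      (-2 * c * W * Real.cosh s) * hqW
  · -- Q
    have h := ((hR0.neg.mul hsinhS)).add ((hcoshS.const_mul c))
    refine h.congr_deriv (Eq.symm ?_)
    simp only [Pi.neg_apply]
    have key : a t / (2 * b t) = R ^ 2 := hr2.symm
    rw [key, Real.sqrt_sq hRpos.le]
    linear_combination (Real.cosh s - 1) * hpA2 + c * Real.sinh s * hqW +
      (-2 * q t * Real.cosh s) * hRW
end

section
/- Let q, p : ℝ → ℝ be continuous. The matrix exponential of the integrated coefficient matrix for the system (Q', P', R') = M(t)·(Q, P, R) with M(t) = [[0,0,q],[0,0,p],[p,q,0]] satisfies: if a(t) = ∫_t^∞ q and b(t) = ∫_t^∞ p, then exp of the matrix [[0,0,-a],[0,0,-b],[-b,-a,0]] equals the matrix [[(1/2)(1+cosh√(2ab)), (a/(2b))(cosh√(2ab)-1), -√(a/(2b)) sinh√(2ab)],[(b/(2a))(cosh√(2ab)-1), (1/2)(1+cosh√(2ab)), -√(b/(2a)) sinh√(2ab)],[-√(b/(2a)) sinh√(2ab), -√(a/(2b))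 sinh√(2ab), cosh√(2ab)]], for a, b > 0. -/
set_option maxHeartbeats 1000000

/-- Closed form of the matrix exponential of [[0,0,-a],[0,0,-b],[-b,-a,0]]. -/
theorem stmt_1 (a b : ℝ) (ha : 0 < a) (hb : 0 < b) :
    NormedSpace.exp (!![0, 0, -a; 0, 0, -b; -b, -a, 0] : Matrix (Fin 3) (Fin 3) ℝ) =
      !![(1 / 2) * (1 + Real.cosh (Real.sqrt (2 * a * b))),
          (a / (2 * b)) * (Real.cosh (Real.sqrt (2 * a * b)) - 1),
          -Real.sqrt (a / (2 * b)) * Real.sinh (Real.sqrt (2 * a * b));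
        (b / (2 * a)) * (Real.cosh (Real.sqrt (2 * a * b)) - 1),
          (1 / 2) * (1 + Real.cosh (Real.sqrt (2 * a * b))),
          -Real.sqrt (b / (2 * a)) * Real.sinh (Real.sqrt (2 * a * b));
        -Real.sqrt (b / (2 * a)) * Real.sinh (Real.sqrt (2 * a * b)),
          -Real.sqrt (a / (2 * b)) * Real.sinh (Real.sqrt (2 * a * b)),
          Real.cosh (Real.sqrt (2 * a * b))] := by
  have hab : (0:ℝ) < 2 * a * b := by positivity
  set s : ℝ := Real.sqrt (2 * a * b) with hs_def
  have hs : 0 < s := Real.sqrt_pos.mpr hab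
  have hs2 : s ^ 2 = 2 * a * b := Real.sq_sqrt hab.le
  have hsne : s ≠ 0 := hs.ne'
  have hane : a ≠ 0 := ha.ne'
  have hbne : b ≠ 0 := hb.ne'
  have h1 : Real.sqrt (a / (2 * b)) = a / s := by
    rw [show a / (2 * b) = (a / s) ^ 2 by rw [div_pow, hs2]; field_simp]
    exact Real.sqrt_sq (by positivity)
  have h2 : Real.sqrt (b / (2 * a)) = b / s := by
    rw [show b / (2 * a) = (b / s) ^ 2 by rw [div_pow, hs2]; field_simp]
    exact Real.sqrt_sq (by positivity)
  clear_value s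
  clear hs_def
  have hb' : b = s ^ 2 / (2 * a) := by field_simp; linarith [hs2]
  subst hb'
  set U : Matrix (Fin 3) (Fin 3) ℝ := !![a, a, a; s^2/(2*a), s^2/(2*a), -(s^2/(2*a)); -s, s, 0]
    with hU
  set V : Matrix (Fin 3) (Fin 3) ℝ :=
    !![1/(4*a), a/(2*s^2), -1/(2*s); 1/(4*a), a/(2*s^2), 1/(2*s); 1/(2*a), -(a/s^2), 0] with hV
  have hUV : U * V = 1 := by
    ext i j
    fin_cases i <;> fin_cases j <;>
      simp [hU, hV, Matrix.mul_apply, Fin.sum_univ_succ] <;> field_simp <;> ring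
  have hVU : V * U = 1 := by
    ext i j
    fin_cases i <;> fin_cases j <;>
      simp [hU, hV, Matrix.mul_apply, Fin.sum_univ_succ] <;> field_simp <;> ring
  have hUunit : IsUnit U := (Matrix.isUnit_iff_isUnit_det U).mpr (Matrix.isUnit_det_of_right_inverse hUV)
  have hUinv : U⁻¹ = V := Matrix.inv_eq_right_inv hUV
  have hA : (!![0, 0, -a; 0, 0, -(s^2/(2*a)); -(s^2/(2*a)), -a, 0] : Matrix (Fin 3) (Fin 3) ℝ)
      = U * Matrix.diagonal ![s, -s, 0] * U⁻¹ := by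
    rw [hUinv]
    have hD : Matrix.diagonal (![s, -s, 0] : Fin 3 → ℝ) = !![s,0,0; 0,-s,0; 0,0,0] := by
      ext i j
      fin_cases i <;> fin_cases j <;>
        simp [Matrix.diagonal, Matrix.vecHead, Matrix.vecTail]
    rw [hD]
    ext i j
    fin_cases i <;> fin_cases j <;>
      simp [hU, hV, Matrix.mul_apply, Fin.sum_univ_succ] <;> field_simp <;> ring
  rw [hA, Matrix.exp_conj U _ hUunit, Matrix.exp_diagonal, hUinv]
  have hexp : NormedSpace.exp (![s, -s, 0] : Fin 3 → ℝ)
      = ![Real.exp s, Real.exp (-s), 1] := by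
    funext i
    rw [Pi.coe_exp]
    fin_cases i <;> simp [← Real.exp_eq_exp_ℝ]
  rw [hexp]
  have hD2 : Matrix.diagonal (![Real.exp s, Real.exp (-s), 1] : Fin 3 → ℝ)
      = !![Real.exp s,0,0; 0,Real.exp (-s),0; 0,0,1] := by
    ext i j
    fin_cases i <;> fin_cases j <;>
      simp [Matrix.diagonal, Matrix.vecHead, Matrix.vecTail]
  rw [hD2]
  have hcosh : Real.cosh s = (Real.exp s + Real.exp (-s)) / 2 := Real.cosh_eq s
  have hsinh : Real.sinh s = (Real.exp s - Real.exp (-s)) / 2 := Real.sinh_eq s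
  ext i j
  fin_cases i <;> fin_cases j <;>
    simp [hU, hV, Matrix.mul_apply, Fin.sum_univ_succ, h1, h2, hcosh, hsinh] <;>
    field_simp <;> ring
end

section
/- Let q, p be continuous functions and a(t) = ∫_t^∞ q(x) dx, b(t) = ∫_t^∞ p(x) dx with a, b > 0 and a' b = a b'. Define Q₁(t) = c(1 + cosh√(2ab)) - √(a/(2b)) sinh√(2ab), P₁(t) = c(b/a)(cosh√(2ab) - 1) - √(b/(2a)) sinh√(2ab), R̃₁(t) = -2c√(b/(2a)) sinh√(2ab) + cosh√(2ab). Then (Q₁, P₁, R̃₁) solves Q₁' = q R̃₁, P₁' = p R̃₁, R̃₁' = p Q₁ + q P₁, with limit (2c, 0, 1) as a, b → 0⁺. -/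
open Filter MeasureTheory

/-- Closed-form solution of the GOE calligraphic ODE system, with boundary
values (2c, 0, 1) at infinity. -/
theorem stmt_11 (q p : ℝ → ℝ) (c : ℝ)
    (hq : Continuous q) (hp : Continuous p)
    (hqint : ∀ t : ℝ, IntegrableOn q (Set.Ioi t))
    (hpint : ∀ t : ℝ, IntegrableOn p (Set.Ioi t))
    (a b : ℝ → ℝ)
    (hadef : ∀ t, a t = ∫ x in Set.Ioi t, q x)
    (hbdef : ∀ t, b t = ∫ x in Set.Ioi t, p x)
    (ha' : ∀ t, HasDerivAt a (-q t) t) (hb' : ∀ t, HasDerivAt b (-p t) t)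
    (hapos : ∀ t, 0 < a t) (hbpos : ∀ t, 0 < b t)
    (hcompat : ∀ t, (-q t) * b t = a t * (-p t)) :
    (∀ t : ℝ,
      HasDerivAt
        (fun t => c * (1 + Real.cosh (Real.sqrt (2 * a t * b t))) -
          Real.sqrt (a t / (2 * b t)) * Real.sinh (Real.sqrt (2 * a t * b t)))
        (q t *
          (-2 * c * Real.sqrt (b t / (2 * a t)) * Real.sinh (Real.sqrt (2 * a t * b t)) +
            Real.cosh (Real.sqrt (2 * a t * b t)))) t ∧
      HasDerivAt
        (fun t => c * (b t / a t) * (Real.cosh (Real.sqrt (2 * a t * b t)) - 1) -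
          Real.sqrt (b t / (2 * a t)) * Real.sinh (Real.sqrt (2 * a t * b t)))
        (p t *
          (-2 * c * Real.sqrt (b t / (2 * a t)) * Real.sinh (Real.sqrt (2 * a t * b t)) +
            Real.cosh (Real.sqrt (2 * a t * b t)))) t ∧
      HasDerivAt
        (fun t => -2 * c * Real.sqrt (b t / (2 * a t)) * Real.sinh (Real.sqrt (2 * a t * b t)) +
          Real.cosh (Real.sqrt (2 * a t * b t)))
        (p t *
            (c * (1 + Real.cosh (Real.sqrt (2 * a t * b t))) -
              Real.sqrt (a t / (2 * b t)) * Real.sinh (Real.sqrt (2 * a t * b t))) +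
          q t *
            (c * (b t / a t) * (Real.cosh (Real.sqrt (2 * a t * b t)) - 1) -
              Real.sqrt (b t / (2 * a t)) * Real.sinh (Real.sqrt (2 * a t * b t)))) t) ∧
    Tendsto
      (fun t =>
        ((c * (1 + Real.cosh (Real.sqrt (2 * a t * b t))) -
            Real.sqrt (a t / (2 * b t)) * Real.sinh (Real.sqrt (2 * a t * b t)),
          c * (b t / a t) * (Real.cosh (Real.sqrt (2 * a t * b t)) - 1) -
            Real.sqrt (b t / (2 * a t)) * Real.sinh (Real.sqrt (2 * a t * b t)),
          -2 * c * Real.sqrt (b t / (2 * a t)) * Real.sinh (Real.sqrt (2 * a t * b t)) +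
            Real.cosh (Real.sqrt (2 * a t * b t))) : ℝ × ℝ × ℝ))
      atTop (nhds ((2 * c : ℝ), (0 : ℝ), (1 : ℝ))) := by
  -- a/b is constant
  set K : ℝ := a 0 / b 0 with hKdef
  have hKpos : 0 < K := div_pos (hapos 0) (hbpos 0)
  have hgdiff : Differentiable ℝ (fun t => a t / b t) := fun t =>
    ((ha' t).div (hb' t) (hbpos t).ne').differentiableAt
  have hgderiv : ∀ t, deriv (fun t => a t / b t) t = 0 := by
    intro t
    have h := (ha' t).div (hb' t) (hbpos t).ne'
    rw [show (fun t => a t / b t) = a / b from rfl, h.deriv]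
    have : -q t * b t - a t * -p t = 0 := by rw [hcompat t]; ring
    rw [this, zero_div]
  have hab : ∀ t, a t = K * b t := by
    intro t
    have h := is_const_of_deriv_eq_zero hgdiff hgderiv t 0
    rw [hKdef, div_mul_eq_mul_div, eq_div_iff (hbpos 0).ne']
    field_simp [(hbpos t).ne', (hbpos 0).ne'] at h
    linear_combination h
  have hqp : ∀ t, q t = K * p t := by
    intro t
    have h := hcompat t
    rw [hab t] at h
    have h2 : q t * b t = K * p t * b t := by linear_combination -h
    exact mul_right_cancel₀ (hbpos t).ne' h2
  set L : ℝ := Real.sqrt (2 * K) with hLdef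
  have hLpos : 0 < L := Real.sqrt_pos.2 (by linarith)
  have hL2 : L ^ 2 = 2 * K := Real.sq_sqrt (by linarith)
  have hsq : ∀ u, Real.sqrt (2 * a u * b u) = L * b u := by
    intro u
    rw [hab u, show 2 * (K * b u) * b u = (2 * K) * (b u * b u) by ring,
      Real.sqrt_mul (by linarith), Real.sqrt_mul_self (hbpos u).le]
  have hA : ∀ u, Real.sqrt (a u / (2 * b u)) = L / 2 := by
    intro u
    rw [hab u, show K * b u / (2 * b u) = 2 * K / 4 by
      field_simp [(hbpos u).ne']; ring,
      Real.sqrt_div' _ (by norm_num : (0:ℝ) ≤ 4),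
      show (4:ℝ) = 2 ^ 2 by norm_num, Real.sqrt_sq (by norm_num : (0:ℝ) ≤ 2)]
  have hB : ∀ u, Real.sqrt (b u / (2 * a u)) = 1 / L := by
    intro u
    have h : b u / (2 * a u) = (2 * K)⁻¹ := by
      rw [hab u]; field_simp [(hbpos u).ne']
    rw [h, Real.sqrt_inv, ← hLdef, one_div]
  have hdiv : ∀ u, b u / a u = 2 / L ^ 2 := by
    intro u
    rw [hab u, hL2]
    field_simp [(hbpos u).ne', hKpos.ne']
  simp only [hsq, hA, hB, hdiv]
  refine ⟨fun t => ?_, ?_⟩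
  · have hbL : HasDerivAt (fun t => L * b t) (L * (-p t)) t := (hb' t).const_mul L
    have hcosh : HasDerivAt (fun t => Real.cosh (L * b t))
        (Real.sinh (L * b t) * (L * (-p t))) t := hbL.cosh
    have hsinh : HasDerivAt (fun t => Real.sinh (L * b t))
        (Real.cosh (L * b t) * (L * (-p t))) t := hbL.sinh
    refine ⟨?_, ?_, ?_⟩
    · have h := (((hasDerivAt_const t (1:ℝ)).add hcosh).const_mul c).sub (hsinh.const_mul (L / 2))
      refine h.congr_deriv ?_
      rw [hqp t]
      have : K = L ^ 2 / 2 := by rw [hL2]; ring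
      rw [this]
      field_simp
      ring
    · have h := ((hcosh.sub_const 1).const_mul (c * (2 / L ^ 2))).sub (hsinh.const_mul (1 / L))
      refine h.congr_deriv ?_
      field_simp
      ring
    · have h := (hsinh.const_mul (-2 * c * (1 / L))).add hcosh
      refine h.congr_deriv ?_
      rw [hqp t]
      have : K = L ^ 2 / 2 := by rw [hL2]; ring
      rw [this]
      field_simp
      ring
  · -- limit
    have hb0 : Tendsto b atTop (nhds 0) := by
      have h1 : Tendsto (fun t => ∫ x in (0:ℝ)..t, p x) atTop (nhds (b 0)) := by
        rw [hbdef 0]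
        exact intervalIntegral_tendsto_integral_Ioi 0 (hpint 0) tendsto_id
      have h2 : Tendsto (fun t => b 0 - ∫ x in (0:ℝ)..t, p x) atTop (nhds (b 0 - b 0)) :=
        tendsto_const_nhds.sub h1
      rw [sub_self] at h2
      refine h2.congr' ?_
      filter_upwards [eventually_ge_atTop (0:ℝ)] with t ht
      have hsplit : (∫ x in Set.Ioi (0:ℝ), p x)
          = (∫ x in Set.Ioc 0 t, p x) + ∫ x in Set.Ioi t, p x := by
        rw [← setIntegral_union (Set.Ioc_disjoint_Ioi le_rfl) measurableSet_Ioi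
          ((hpint 0).mono_set Set.Ioc_subset_Ioi_self) (hpint t),
          Set.Ioc_union_Ioi_eq_Ioi ht]
      rw [intervalIntegral.integral_of_le ht, hbdef 0, hbdef t, hsplit]
      ring
    have hcont : Continuous (fun u : ℝ =>
        ((c * (1 + Real.cosh (L * u)) - L / 2 * Real.sinh (L * u),
          c * (2 / L ^ 2) * (Real.cosh (L * u) - 1) - 1 / L * Real.sinh (L * u),
          -2 * c * (1 / L) * Real.sinh (L * u) + Real.cosh (L * u)) : ℝ × ℝ × ℝ)) := by
      fun_prop
    have := (hcont.tendsto 0).comp hb0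
    convert this using 2 <;> simp <;> ring
end
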